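/- arXiv:2301.03874 — 2 statements merged into one kernel-verified Lean document; each statement's English description precedes it below -/
import Mathlib

section
/- For nonnegative reals a and complex numbers b, one has max{|a + b|, |a − b|} ≥ a. Consequently, for sequences (a_n) of nonnegative reals and (b_n) of complex numbers, the decreasing rearrangement of the double sequence obtained by interleaving (|a_n + b_n|) and (|a_n − b_n|) dominates pointwise the decreasing rearrangement of the sequence (a_n). -/
/-- The decreasing rearrangement of a sequence of reals (tending to `0`):
`μ(x)(n) = inf {s ≥ 0 : #{k : x(k) > s} ≤ n}`. -/
noncomputable def decRearr (x : ℕ → ℝ) (n : ℕ) : ℝ :=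
  sInf {s : ℝ | 0 ≤ s ∧ {k | s < x k}.Finite ∧ {k | s < x k}.ncard ≤ n}

lemma max_abs_key (a : ℝ) (b : ℂ) (ha : 0 ≤ a) :
    a ≤ max (‖(a : ℂ) + b‖) (‖(a : ℂ) - b‖) := by
  have h2 : (2 * a : ℝ) = ‖((a : ℂ) + b) + ((a : ℂ) - b)‖ := by
    rw [show ((a : ℂ) + b) + ((a : ℂ) - b) = ((2 * a : ℝ) : ℂ) by push_cast; ring]
    rw [Complex.norm_real, Real.norm_eq_abs, abs_of_nonneg (by linarith)]
  have htri := norm_add_le ((a : ℂ) + b) ((a : ℂ) - b)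
  have h1 : ‖(a : ℂ) + b‖
      ≤ max (‖(a : ℂ) + b‖) (‖(a : ℂ) - b‖) := le_max_left _ _
  have h3 : ‖(a : ℂ) - b‖
      ≤ max (‖(a : ℂ) + b‖) (‖(a : ℂ) - b‖) := le_max_right _ _
  linarith

/-- For a nonnegative real `a` and complex `b`,
`max(|a + b|, |a − b|) ≥ a`.  Consequently, for a nonincreasing-rearrangeable
sequence `(a_n)` of nonnegative reals and complex numbers `(b_n)`, the
decreasing rearrangement of the interleaving of `(|a_n + b_n|)` and
`(|a_n − b_n|)` dominates pointwise the decreasing rearrangement of `(a_n)`. -/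
theorem max_abs_add_sub_ge_and_rearrangement_domination :
    (∀ (a : ℝ) (b : ℂ), 0 ≤ a →
      a ≤ max (‖(a : ℂ) + b‖) (‖(a : ℂ) - b‖)) ∧
    (∀ (a : ℕ → ℝ) (b : ℕ → ℂ) (c : ℕ → ℝ),
      (∀ n, 0 ≤ a n) →
      Filter.Tendsto a Filter.atTop (nhds 0) →
      Filter.Tendsto c Filter.atTop (nhds 0) →
      (∀ n, c (2 * n) = ‖(a n : ℂ) + b n‖ ∧
            c (2 * n + 1) = ‖(a n : ℂ) - b n‖) →
      ∀ n, decRearr a n ≤ decRearr c n) := by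
  refine ⟨fun a b ha => max_abs_key a b ha, ?_⟩
  intro a b c ha hta htc hc n
  -- The set for c is nonempty
  have hF : {k | 1 < c k}.Finite := by
    have := htc.eventually (eventually_lt_nhds (show (0:ℝ) < 1 by norm_num))
    rcases Filter.eventually_atTop.mp this with ⟨N, hN⟩
    apply Set.Finite.subset (Set.finite_Iio N)
    intro k hk
    by_contra h
    exact absurd (hN k (le_of_not_gt h)) (not_lt.mpr hk.le)
  set s0 : ℝ := 1 + ∑ k ∈ hF.toFinset, |c k| with hs0
  have hs0nonneg : 0 ≤ s0 := by
    have : (0:ℝ) ≤ ∑ k ∈ hF.toFinset, |c k| :=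
      Finset.sum_nonneg fun k _ => abs_nonneg _
    linarith
  have hs0empty : {k | s0 < c k} = ∅ := by
    ext k
    simp only [Set.mem_setOf_eq, Set.mem_empty_iff_false, iff_false, not_lt]
    by_cases hk : 1 < c k
    · have hmem : k ∈ hF.toFinset := by simpa using hk
      have hle : |c k| ≤ ∑ j ∈ hF.toFinset, |c j| :=
        Finset.single_le_sum (fun j _ => abs_nonneg (c j)) hmem
      have := le_abs_self (c k)
      linarith
    · push_neg at hk
      have : (0:ℝ) ≤ ∑ k ∈ hF.toFinset, |c k| :=
        Finset.sum_nonneg fun k _ => abs_nonneg _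
      linarith
  have hne : Set.Nonempty {s : ℝ | 0 ≤ s ∧ {k | s < c k}.Finite ∧ {k | s < c k}.ncard ≤ n} := by
    refine ⟨s0, hs0nonneg, ?_, ?_⟩
    · rw [hs0empty]; exact Set.finite_empty
    · rw [hs0empty]; simp
  have hbdd : BddBelow {s : ℝ | 0 ≤ s ∧ {k | s < a k}.Finite ∧ {k | s < a k}.ncard ≤ n} :=
    ⟨0, fun s hs => hs.1⟩
  apply csInf_le_csInf hbdd hne
  -- subset
  intro s hs
  obtain ⟨hs0', hfin, hcard⟩ := hs
  set f : ℕ → ℕ := fun k => if s < c (2 * k) then 2 * k else 2 * k + 1 with hf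
  have hmaps : ∀ k ∈ {k | s < a k}, f k ∈ {j | s < c j} := by
    intro k hk
    have hmax := max_abs_key (a k) (b k) (ha k)
    rw [← (hc k).1, ← (hc k).2] at hmax
    have hk' : s < a k := hk
    simp only [hf, Set.mem_setOf_eq]
    by_cases h1 : s < c (2 * k)
    · rw [if_pos h1]; exact h1
    · rw [if_neg h1]
      rcases le_max_iff.mp hmax with h | h
      · exact absurd (lt_of_lt_of_le hk' h) h1
      · exact lt_of_lt_of_le hk' h
  have hinj : Set.InjOn f {k | s < a k} := by
    intro k1 _ k2 _ heq
    simp only [hf] at heq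
    split_ifs at heq <;> omega
  have hfin' : {k | s < a k}.Finite := by
    apply Set.Finite.of_finite_image _ hinj
    exact hfin.subset (Set.image_subset_iff.mpr hmaps)
  refine ⟨hs0', hfin', ?_⟩
  calc {k | s < a k}.ncard ≤ {j | s < c j}.ncard :=
        Set.ncard_le_ncard_of_injOn f hmaps hinj hfin
    _ ≤ n := hcard
end

section
/- Let E be a symmetric sequence space (Banach ideal space of sequences, permutation invariant) that does not coincide, up to equivalence of norms, with c₀ or ℓ∞. Then its Köthe dual E^× does not coincide with ℓ₁ (up to equivalent norms), i.e. E^× ≠ ℓ₁. -/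
/-- A symmetric sequence space: a Banach ideal space of real sequences,
invariant (with equal norms) under permutations of the coordinates, containing
the standard unit vectors. -/
structure SymSeqSpace where
  Mem : (ℕ → ℝ) → Prop
  N : (ℕ → ℝ) → ℝ
  mem_add : ∀ {x y}, Mem x → Mem y → Mem (x + y)
  mem_smul : ∀ (c : ℝ) {x}, Mem x → Mem (c • x)
  norm_nonneg : ∀ x, 0 ≤ N x
  norm_triangle : ∀ {x y}, Mem x → Mem y → N (x + y) ≤ N x + N y
  norm_smul : ∀ (c : ℝ) (x), N (c • x) = |c| * N x
  norm_eq_zero : ∀ {x}, Mem x → N x = 0 → x = 0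
  ideal : ∀ {x y : ℕ → ℝ}, (∀ k, |x k| ≤ |y k|) → Mem y → Mem x ∧ N x ≤ N y
  symm_mem : ∀ (π : Equiv.Perm ℕ) (x), Mem (x ∘ π) ↔ Mem x
  symm_norm : ∀ (π : Equiv.Perm ℕ) (x), N (x ∘ π) = N x
  basis_mem : ∀ n : ℕ, Mem (Pi.single n 1)
  complete : ∀ u : ℕ → (ℕ → ℝ), (∀ n, Mem (u n)) →
    (∀ ε > (0:ℝ), ∃ n₀, ∀ m ≥ n₀, ∀ n ≥ n₀, N (u m - u n) < ε) →
    ∃ x, Mem x ∧ Filter.Tendsto (fun n => N (u n - x)) Filter.atTop (nhds 0)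

/-- `E` coincides, up to equivalence of norms, with the sequence space with
membership predicate `S` and norm `Ns`. -/
def SymSeqSpace.EquivTo (E : SymSeqSpace) (S : (ℕ → ℝ) → Prop)
    (Ns : (ℕ → ℝ) → ℝ) : Prop :=
  (∀ x, E.Mem x ↔ S x) ∧
    ∃ c C : ℝ, 0 < c ∧ 0 < C ∧ ∀ x, E.Mem x → c * Ns x ≤ E.N x ∧ E.N x ≤ C * Ns x

/-- Membership in the Köthe dual of `E`. -/
def SymSeqSpace.KMem (E : SymSeqSpace) (y : ℕ → ℝ) : Prop :=
  ∀ x, E.Mem x → Summable fun k => |x k * y k|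

/-- The norm of the Köthe dual of `E`. -/
noncomputable def SymSeqSpace.KN (E : SymSeqSpace) (y : ℕ → ℝ) : ℝ :=
  sSup {r : ℝ | ∃ x, E.Mem x ∧ E.N x ≤ 1 ∧ r = ∑' k, |x k * y k|}

open Filter Set in
lemma aux_equiv_of_infinite (s t : Set ℕ) (hs : s.Infinite) (ht : t.Infinite) :
    Nonempty (s ≃ t) := by
  have := hs.to_subtype
  have := ht.to_subtype
  exact nonempty_equiv_of_countable

lemma aux_exists_perm (s t : Set ℕ) (h1 : Nonempty (s ≃ t))
    (h2 : Nonempty ((sᶜ : Set ℕ) ≃ ((tᶜ : Set ℕ)))) :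
    ∃ π : Equiv.Perm ℕ, ∀ k, π k ∈ t ↔ k ∈ s := by
  classical
  obtain ⟨e⟩ := h1
  obtain ⟨e'⟩ := h2
  refine ⟨(Equiv.Set.sumCompl s).symm.trans ((e.sumCongr e').trans (Equiv.Set.sumCompl t)), ?_⟩
  intro k
  by_cases hk : k ∈ s
  · simp only [Equiv.trans_apply, Equiv.Set.sumCompl_symm_apply_of_mem hk, Equiv.sumCongr_apply,
      Sum.map_inl, Equiv.Set.sumCompl_apply_inl]
    exact iff_of_true (e ⟨k, hk⟩).2 hk
  · simp only [Equiv.trans_apply, Equiv.Set.sumCompl_symm_apply_of_notMem hk, Equiv.sumCongr_apply,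
      Sum.map_inr, Equiv.Set.sumCompl_apply_inr]
    exact iff_of_false (e' ⟨k, hk⟩).2 hk

/-- indicator of the initial segment `[0, m)` -/
def SymSeqSpace.ind (m : ℕ) : ℕ → ℝ := fun k => if k < m then 1 else 0

namespace SymSeqSpace

lemma ind_nonneg (m k : ℕ) : 0 ≤ ind m k := by
  unfold ind; split <;> norm_num

lemma abs_ind (m k : ℕ) : |ind m k| = ind m k := abs_of_nonneg (ind_nonneg m k)

variable (E : SymSeqSpace)

lemma mem_zero : E.Mem 0 := by
  have := E.mem_smul 0 (E.basis_mem 0)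
  rwa [zero_smul] at this

lemma N_zero : E.N 0 = 0 := by
  have := E.norm_smul 0 (0 : ℕ → ℝ)
  rwa [zero_smul, abs_zero, zero_mul] at this

lemma mem_ind (m : ℕ) : E.Mem (ind m) := by
  induction m with
  | zero =>
    have : ind 0 = 0 := by funext k; simp [ind]
    rw [this]; exact E.mem_zero
  | succ m ih =>
    have h : ind (m + 1) = ind m + Pi.single m 1 := by
      funext k
      by_cases h1 : k < m
      · simp [ind, h1, Nat.lt_succ_of_lt h1, Pi.single_apply, Nat.ne_of_lt h1]
      · by_cases h2 : k = m
        · simp [ind, h2, Pi.single_apply]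
        · have h3 : ¬ k < m + 1 := by omega
          simp [ind, h1, h3, Pi.single_apply, h2]
    rw [h]; exact E.mem_add ih (E.basis_mem m)

lemma mem_sub {x y : ℕ → ℝ} (hx : E.Mem x) (hy : E.Mem y) : E.Mem (x - y) := by
  have := E.mem_add hx (E.mem_smul (-1) hy)
  rwa [neg_one_smul, ← sub_eq_add_neg] at this

lemma N_neg (x : ℕ → ℝ) : E.N (-x) = E.N x := by
  have := E.norm_smul (-1) x
  rwa [neg_one_smul, abs_neg, abs_one, one_mul] at this

end SymSeqSpace
/-- Let `E` be a symmetric sequence space that does not coincide,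
up to equivalence of norms, with `c₀` or `ℓ∞`.  Then its Köthe dual `E^×` is
not `ℓ₁` (up to equivalent norms). -/
theorem kothe_dual_ne_l1_of_ne_c0_linfty
    (E : SymSeqSpace)
    (hc0 : ¬ E.EquivTo (fun x => Filter.Tendsto x Filter.atTop (nhds 0))
      (fun x => ⨆ k, |x k|))
    (hlinf : ¬ E.EquivTo (fun x => ∃ M : ℝ, ∀ k, |x k| ≤ M)
      (fun x => ⨆ k, |x k|)) :
    ¬ ((∀ y, E.KMem y ↔ Summable fun k => |y k|) ∧
        ∃ c C : ℝ, 0 < c ∧ 0 < C ∧ ∀ y, E.KMem y →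
          c * ∑' k, |y k| ≤ E.KN y ∧ E.KN y ≤ C * ∑' k, |y k|) := by
  rintro ⟨-, c, C, hc, hC, hnorm⟩
  classical
  open SymSeqSpace in
  -- finitely supported sequences are in the Köthe dual
  have hKfin : ∀ (s : Finset ℕ) (y : ℕ → ℝ), (∀ k ∉ s, y k = 0) → E.KMem y := by
    intro s y hy x hx
    apply summable_of_ne_finset_zero (s := s)
    intro k hk
    simp [hy k hk]
  -- Step A (unit ball version): elements of the unit ball are bounded by C
  have hA1 : ∀ x, E.Mem x → E.N x ≤ 1 → ∀ k, |x k| ≤ C := by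
    intro x hx hx1 k
    have hsupp : ∀ j ∉ ({k} : Finset ℕ), (Pi.single k 1 : ℕ → ℝ) j = 0 := by
      intro j hj
      simp only [Finset.mem_singleton] at hj
      simp [Pi.single_apply, hj]
    have hky : E.KMem (Pi.single k 1) := hKfin {k} _ hsupp
    have hts : (∑' j, |Pi.single k (1:ℝ) j|) = 1 := by
      rw [tsum_eq_sum (s := {k}) (fun j hj => by simp [hsupp j hj])]
      simp
    obtain ⟨hlow, hhigh⟩ := hnorm _ hky
    rw [hts, mul_one] at hlow hhigh
    rw [SymSeqSpace.KN] at hlow hhigh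
    have hbdd : BddAbove {r : ℝ | ∃ x, E.Mem x ∧ E.N x ≤ 1 ∧ r = ∑' j, |x j * (Pi.single k 1 : ℕ → ℝ) j|} := by
      by_contra hb
      rw [Real.sSup_of_not_bddAbove hb] at hlow
      linarith
    have hmemS : |x k| ∈ {r : ℝ | ∃ x, E.Mem x ∧ E.N x ≤ 1 ∧ r = ∑' j, |x j * (Pi.single k 1 : ℕ → ℝ) j|} := by
      refine ⟨x, hx, hx1, ?_⟩
      rw [tsum_eq_sum (s := {k}) (fun j hj => by simp [hsupp j hj])]
      simp
    exact le_trans (le_csSup hbdd hmemS) hhigh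
  -- Step A: coordinates are dominated by the norm
  have hA : ∀ x, E.Mem x → ∀ k, |x k| ≤ C * E.N x := by
    intro x hx k
    rcases eq_or_lt_of_le (E.norm_nonneg x) with h0 | h0
    · have hx0 : x = 0 := E.norm_eq_zero hx h0.symm
      simp [hx0, E.N_zero]
    · have hsm := E.mem_smul (E.N x)⁻¹ hx
      have hN : E.N ((E.N x)⁻¹ • x) ≤ 1 := by
        rw [E.norm_smul, abs_of_pos (inv_pos.2 h0), inv_mul_cancel₀ (ne_of_gt h0)]
      have hb := hA1 _ hsm hN k
      have h2 : |((E.N x)⁻¹ • x) k| = (E.N x)⁻¹ * |x k| := by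
        simp [abs_mul, abs_of_pos (inv_pos.2 h0)]
      rw [h2] at hb
      calc |x k| = E.N x * ((E.N x)⁻¹ * |x k|) := by
            field_simp
      _ ≤ E.N x * C := by
            exact mul_le_mul_of_nonneg_left hb (le_of_lt h0)
      _ = C * E.N x := mul_comm _ _
  -- the fundamental function is bounded
  have hK : ∀ m : ℕ, E.N (SymSeqSpace.ind m) ≤ 2 / c := by
    intro m
    set n : ℕ := ⌈(2 * (C * m + 1)) / c⌉₊ with hn
    have hnge : (2 * (C * m + 1)) / c ≤ (n : ℝ) := Nat.le_ceil _
    have hsupp : ∀ k ∉ Finset.range n, SymSeqSpace.ind n k = 0 := by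
      intro k hk
      rw [Finset.mem_range] at hk
      simp [SymSeqSpace.ind, hk]
    have hy : E.KMem (SymSeqSpace.ind n) := hKfin (Finset.range n) _ hsupp
    have hts : (∑' k, |SymSeqSpace.ind n k|) = n := by
      rw [tsum_eq_sum (s := Finset.range n) (fun k hk => by simp [hsupp k hk])]
      have h1 : ∀ k ∈ Finset.range n, |SymSeqSpace.ind n k| = 1 := by
        intro k hk; rw [Finset.mem_range] at hk; simp [SymSeqSpace.ind, hk]
      rw [Finset.sum_congr rfl h1]
      simp
    obtain ⟨hlow, -⟩ := hnorm _ hy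
    rw [hts] at hlow
    rw [SymSeqSpace.KN] at hlow
    -- extract a witness from the supremum
    have hex : ∃ x, E.Mem x ∧ E.N x ≤ 1 ∧
        c * n - 1 < ∑' k, |x k * SymSeqSpace.ind n k| := by
      have h0S : (0:ℝ) ∈ {r : ℝ | ∃ x, E.Mem x ∧ E.N x ≤ 1 ∧
          r = ∑' k, |x k * SymSeqSpace.ind n k|} := by
        refine ⟨0, E.mem_zero, by rw [E.N_zero]; exact zero_le_one, by simp⟩
      by_cases hb : BddAbove {r : ℝ | ∃ x, E.Mem x ∧ E.N x ≤ 1 ∧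
          r = ∑' k, |x k * SymSeqSpace.ind n k|}
      · have hlt : c * n - 1 < sSup {r : ℝ | ∃ x, E.Mem x ∧ E.N x ≤ 1 ∧
            r = ∑' k, |x k * SymSeqSpace.ind n k|} := lt_of_lt_of_le (by linarith) hlow
        obtain ⟨r, hrS, hr⟩ := exists_lt_of_lt_csSup ⟨0, h0S⟩ hlt
        obtain ⟨x, h1, h2, rfl⟩ := hrS
        exact ⟨x, h1, h2, hr⟩
      · obtain ⟨r, hrS, hr⟩ := not_bddAbove_iff.1 hb (c * n - 1)
        obtain ⟨x, h1, h2, rfl⟩ := hrS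
        exact ⟨x, h1, h2, hr⟩
    obtain ⟨x, hx, hx1, hsum⟩ := hex
    have hxC : ∀ k, |x k| ≤ C := hA1 x hx hx1
    have htsx : (∑' k, |x k * SymSeqSpace.ind n k|) = ∑ k ∈ Finset.range n, |x k| := by
      rw [tsum_eq_sum (s := Finset.range n) (fun k hk => by simp [hsupp k hk])]
      refine Finset.sum_congr rfl (fun k hk => ?_)
      rw [Finset.mem_range] at hk
      simp [SymSeqSpace.ind, hk]
    rw [htsx] at hsum
    set A := (Finset.range n).filter (fun k => c / 2 ≤ |x k|) with hAdef
    have hsplit : ∑ k ∈ Finset.range n, |x k| ≤ A.card * C + n * (c / 2) := by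
      rw [← Finset.sum_filter_add_sum_filter_not (Finset.range n) (fun k => c / 2 ≤ |x k|)]
      have h1 : ∑ k ∈ A, |x k| ≤ A.card * C := by
        have := Finset.sum_le_card_nsmul A (fun k => |x k|) C (fun k _ => hxC k)
        rwa [nsmul_eq_mul] at this
      have h2 : ∑ k ∈ (Finset.range n).filter (fun k => ¬ c / 2 ≤ |x k|), |x k| ≤
          n * (c / 2) := by
        have hle := Finset.sum_le_card_nsmul ((Finset.range n).filter (fun k => ¬ c / 2 ≤ |x k|))
          (fun k => |x k|) (c / 2)
          (fun k hk => le_of_lt (lt_of_not_ge (Finset.mem_filter.1 hk).2))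
        rw [nsmul_eq_mul] at hle
        refine hle.trans ?_
        have hcard := Finset.card_filter_le (Finset.range n) (fun k => ¬ c / 2 ≤ |x k|)
        rw [Finset.card_range] at hcard
        have : ((Finset.filter (fun k => ¬ c / 2 ≤ |x k|) (Finset.range n)).card : ℝ) ≤ n := by
          exact_mod_cast hcard
        nlinarith [hc]
      linarith
    have hcard' : m ≤ A.card := by
      have h2n : 2 * (C * m + 1) ≤ c * n := by
        rw [div_le_iff₀ hc] at hnge
        linarith
      have hCm : C * m ≤ A.card * C := by nlinarith
      have : (m : ℝ) ≤ A.card := by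
        have := le_of_mul_le_mul_right (by linarith [hCm] : (m : ℝ) * C ≤ A.card * C) hC
        exact this
      exact_mod_cast this
    obtain ⟨A', hA'sub, hA'card⟩ := Finset.exists_subset_card_eq hcard'
    set w : ℕ → ℝ := fun k => if k ∈ A' then 1 else 0 with hw
    have hdom : ∀ k, |((c / 2 : ℝ) • w) k| ≤ |x k| := by
      intro k
      by_cases hk : k ∈ A'
      · have hck := (Finset.mem_filter.1 (hA'sub hk)).2
        have : ((c / 2 : ℝ) • w) k = c / 2 := by simp [hw, hk]
        rw [this, abs_of_pos (by linarith)]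
        exact hck
      · have : ((c / 2 : ℝ) • w) k = 0 := by simp [hw, hk]
        rw [this]
        simp
    obtain ⟨hmz, hNz⟩ := E.ideal hdom hx
    have hNw : E.N w ≤ 2 / c := by
      have hwz : w = (2 / c : ℝ) • ((c / 2 : ℝ) • w) := by
        rw [smul_smul]
        have : (2 / c) * (c / 2) = 1 := by field_simp
        rw [this, one_smul]
      rw [hwz, E.norm_smul, abs_of_pos (by positivity)]
      have h1 : E.N ((c / 2 : ℝ) • w) ≤ 1 := le_trans hNz hx1
      calc (2 / c) * E.N ((c / 2 : ℝ) • w) ≤ (2 / c) * 1 :=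
            mul_le_mul_of_nonneg_left h1 (by positivity)
      _ = 2 / c := mul_one _
    have hcards : (Finset.range m).card = A'.card := by
      rw [Finset.card_range, hA'card]
    have eqv : Nonempty ((↑(Finset.range m) : Set ℕ) ≃ (↑A' : Set ℕ)) :=
      ⟨Finset.equivOfCardEq hcards⟩
    have eqvc : Nonempty (((↑(Finset.range m) : Set ℕ)ᶜ : Set ℕ) ≃ ((↑A' : Set ℕ)ᶜ : Set ℕ)) :=
      aux_equiv_of_infinite _ _ ((Finset.range m).finite_toSet.infinite_compl)
        (A'.finite_toSet.infinite_compl)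
    obtain ⟨π, hπ⟩ := aux_exists_perm _ _ eqv eqvc
    have hwπ : w ∘ π = SymSeqSpace.ind m := by
      funext k
      have hiff := hπ k
      simp only [Finset.coe_range, Set.mem_Iio, Finset.mem_coe] at hiff
      by_cases hk : k < m
      · simp [hw, SymSeqSpace.ind, Function.comp, hiff.2 hk, hk]
      · have : π k ∉ A' := fun h => hk (hiff.1 h)
        simp [hw, SymSeqSpace.ind, Function.comp, this, hk]
    calc E.N (SymSeqSpace.ind m) = E.N (w ∘ π) := by rw [hwπ]
    _ = E.N w := E.symm_norm π w
    _ ≤ 2 / c := hNw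
  -- finitely supported sequences: membership and norm bound
  have hFin : ∀ (b : ℝ) (M : ℕ) (z : ℕ → ℝ), 0 ≤ b →
      (∀ k, |z k| ≤ b * SymSeqSpace.ind M k) → E.Mem z ∧ E.N z ≤ b * (2 / c) := by
    intro b M z hb hz
    have hmem := E.mem_smul b (E.mem_ind M)
    have hdom : ∀ k, |z k| ≤ |(b • SymSeqSpace.ind M) k| := by
      intro k
      have : (b • SymSeqSpace.ind M) k = b * SymSeqSpace.ind M k := rfl
      rw [this, abs_mul, abs_of_nonneg hb, SymSeqSpace.abs_ind]
      exact hz k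
    obtain ⟨h1, h2⟩ := E.ideal hdom hmem
    refine ⟨h1, h2.trans ?_⟩
    rw [E.norm_smul, abs_of_nonneg hb]
    exact mul_le_mul_of_nonneg_left (hK M) hb
  -- every null sequence belongs to E, with norm at most (2/c) · sup
  have hC0 : ∀ x : ℕ → ℝ, Filter.Tendsto x Filter.atTop (nhds 0) →
      E.Mem x ∧ E.N x ≤ (2 / c) * ⨆ k, |x k| := by
    intro x hx
    have habs : Filter.Tendsto (fun k => |x k|) Filter.atTop (nhds 0) := by
      simpa using hx.abs
    have hbddr : BddAbove (Set.range fun k => |x k|) := habs.bddAbove_range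
    set S := ⨆ k, |x k| with hSdef
    have hxS : ∀ k, |x k| ≤ S := fun k => le_ciSup hbddr k
    have hS0 : 0 ≤ S := le_trans (abs_nonneg _) (hxS 0)
    set u : ℕ → ℕ → ℝ := fun n k => if k < n then x k else 0 with hu
    have hudom : ∀ n k, |u n k| ≤ S * SymSeqSpace.ind n k := by
      intro n k
      by_cases hk : k < n
      · simp only [hu, hk, if_pos, SymSeqSpace.ind, if_pos hk, mul_one]
        exact hxS k
      · simp [hu, hk, SymSeqSpace.ind]
    have humem : ∀ n, E.Mem (u n) := fun n => (hFin S n (u n) hS0 (hudom n)).1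
    have huN : ∀ n, E.N (u n) ≤ S * (2 / c) := fun n => (hFin S n (u n) hS0 (hudom n)).2
    have hcauchy : ∀ ε > (0:ℝ), ∃ n₀, ∀ m ≥ n₀, ∀ n ≥ n₀, E.N (u m - u n) < ε := by
      intro ε hε
      set δ : ℝ := ε / (2 / c + 1) with hδ
      have hδpos : 0 < δ := by positivity
      obtain ⟨n₀, hn₀⟩ := (Metric.tendsto_atTop.1 habs) δ hδpos
      refine ⟨n₀, fun m hm n hn => ?_⟩
      have hsmall : ∀ k, k ≥ n₀ → |x k| < δ := by
        intro k hk
        have := hn₀ k hk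
        rwa [Real.dist_eq, sub_zero, abs_abs] at this
      have hdom2 : ∀ k, |(u m - u n) k| ≤ δ * SymSeqSpace.ind (max m n) k := by
        intro k
        have huk : (u m - u n) k = u m k - u n k := rfl
        by_cases hkm : k < m <;> by_cases hkn : k < n
        · simp only [huk, hu, Pi.sub_apply, if_pos hkm, if_pos hkn, sub_self, abs_zero]
          exact mul_nonneg hδpos.le (SymSeqSpace.ind_nonneg _ _)
        · have hkmax : k < max m n := lt_max_of_lt_left hkm
          have hk0 : n₀ ≤ k := le_trans hn (not_lt.1 hkn)
          have he : (u m - u n) k = x k := by simp [huk, hu, hkm, hkn]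
          have h1 : SymSeqSpace.ind (max m n) k = 1 := by simp [SymSeqSpace.ind, hkmax]
          rw [he, h1, mul_one]
          exact (hsmall k hk0).le
        · have hkmax : k < max m n := lt_max_of_lt_right hkn
          have hk0 : n₀ ≤ k := le_trans hm (not_lt.1 hkm)
          have he : (u m - u n) k = -(x k) := by simp [huk, hu, hkm, hkn]
          have h1 : SymSeqSpace.ind (max m n) k = 1 := by simp [SymSeqSpace.ind, hkmax]
          rw [he, h1, mul_one, abs_neg]
          exact (hsmall k hk0).le
        · simp only [huk, hu, Pi.sub_apply, if_neg hkm, if_neg hkn, sub_self, abs_zero]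
          exact mul_nonneg hδpos.le (SymSeqSpace.ind_nonneg _ _)
      have := (hFin δ (max m n) _ (le_of_lt hδpos) hdom2).2
      refine lt_of_le_of_lt this ?_
      have : δ * (2 / c + 1) = ε := by
        rw [hδ]; field_simp
      nlinarith [hδpos]
    obtain ⟨x', hx'mem, hx'lim⟩ := E.complete u humem hcauchy
    have hxx' : x = x' := by
      funext k
      have hd : ∀ n, |u n k - x' k| ≤ C * E.N (u n - x') := by
        intro n
        have hm : E.Mem (u n - x') := E.mem_sub (humem n) hx'mem
        have := hA _ hm k
        simpa using this
      have h1 : Filter.Tendsto (fun n => u n k) Filter.atTop (nhds (x' k)) := by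
        rw [tendsto_iff_norm_sub_tendsto_zero]
        refine squeeze_zero (fun n => norm_nonneg _) (fun n => ?_)
          (by simpa using hx'lim.const_mul C)
        simpa [Real.norm_eq_abs] using hd n
      have h2 : Filter.Tendsto (fun n => u n k) Filter.atTop (nhds (x k)) := by
        refine Filter.Tendsto.congr' ?_ tendsto_const_nhds
        filter_upwards [Filter.eventually_ge_atTop (k + 1)] with n hn
        simp [hu, show k < n by omega]
      exact tendsto_nhds_unique h2 h1
    subst hxx'
    refine ⟨hx'mem, ?_⟩
    have hNbound : ∀ n, E.N x ≤ E.N (x - u n) + S * (2 / c) := by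
      intro n
      have hdc : x = (x - u n) + u n := by ring
      calc E.N x = E.N ((x - u n) + u n) := by rw [← hdc]
      _ ≤ E.N (x - u n) + E.N (u n) := E.norm_triangle (E.mem_sub hx'mem (humem n)) (humem n)
      _ ≤ E.N (x - u n) + S * (2 / c) := by linarith [huN n]
    have hNeq : ∀ n, E.N (x - u n) = E.N (u n - x) := by
      intro n
      rw [show x - u n = -(u n - x) by ring, E.N_neg]
    have hlim2 : Filter.Tendsto (fun n => E.N (x - u n) + S * (2 / c)) Filter.atTop
        (nhds (0 + S * (2 / c))) := by
      refine Filter.Tendsto.add ?_ tendsto_const_nhds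
      simpa [hNeq] using hx'lim
    have := ge_of_tendsto hlim2 (Filter.Eventually.of_forall hNbound)
    rw [zero_add] at this
    linarith [this]
  -- if some member of E does not tend to zero, then the constant sequence 1 is in E
  have hOne : ∀ x, E.Mem x → ¬ Filter.Tendsto x Filter.atTop (nhds 0) →
      E.Mem (fun _ => (1:ℝ)) := by
    intro x hx hnt
    have hfr : ∃ ε > (0:ℝ), ∀ N, ∃ k ≥ N, ε ≤ |x k| := by
      by_contra hcon
      push_neg at hcon
      apply hnt
      rw [Metric.tendsto_atTop]
      intro ε hε
      obtain ⟨N, hN⟩ := hcon ε hε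
      exact ⟨N, fun k hk => by rw [Real.dist_eq, sub_zero]; exact hN k hk⟩
    obtain ⟨ε, hε, hfreq⟩ := hfr
    set A : Set ℕ := {k | ε ≤ |x k|} with hAdef
    have hAinf : A.Infinite := by
      by_contra hfin
      rw [Set.not_infinite] at hfin
      obtain ⟨N, hN⟩ := hfin.bddAbove
      obtain ⟨k, hk1, hk2⟩ := hfreq (N + 1)
      have : k ≤ N := hN hk2
      omega
    set e : ℕ ↪ A := Set.Infinite.natEmbedding A hAinf with he
    set T : Set ℕ := Set.range (fun j => (e (2 * j) : ℕ)) with hT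
    have hTsub : T ⊆ A := by
      rintro - ⟨j, rfl⟩
      exact (e (2 * j)).2
    have hinj : ∀ i j, (e i : ℕ) = (e j : ℕ) → i = j := by
      intro i j hij
      exact e.injective (Subtype.coe_injective hij)
    have hTinf : T.Infinite := by
      apply Set.infinite_range_of_injective
      intro a b hab
      have := hinj _ _ hab
      omega
    have hTcinf : Tᶜ.Infinite := by
      apply Set.Infinite.mono (s := Set.range (fun j => (e (2 * j + 1) : ℕ)))
      · rintro - ⟨j, rfl⟩
        rintro ⟨i, hi⟩
        have := hinj _ _ hi
        omega
      · apply Set.infinite_range_of_injective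
        intro a b hab
        have := hinj _ _ hab
        omega
    set u : ℕ → ℝ := fun k => if k ∈ T then 1 else 0 with hudef
    have humem : E.Mem u := by
      have hdom : ∀ k, |u k| ≤ |(ε⁻¹ • x) k| := by
        intro k
        by_cases hk : k ∈ T
        · have hεk : ε ≤ |x k| := hTsub hk
          have h1 : |u k| = 1 := by simp [hudef, hk]
          have h2 : |(ε⁻¹ • x) k| = ε⁻¹ * |x k| := by
            have : (ε⁻¹ • x) k = ε⁻¹ * x k := rfl
            rw [this, abs_mul, abs_of_pos (inv_pos.2 hε)]
          rw [h1, h2]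
          rw [show (1:ℝ) = ε⁻¹ * ε by field_simp]
          exact mul_le_mul_of_nonneg_left hεk (by positivity)
        · simp [hudef, hk]
          positivity
      exact (E.ideal hdom (E.mem_smul _ hx)).1
    obtain ⟨π, hπ⟩ := aux_exists_perm Tᶜ T (aux_equiv_of_infinite _ _ hTcinf hTinf)
      (by rw [compl_compl]; exact aux_equiv_of_infinite _ _ hTinf hTcinf)
    have huπ : E.Mem (u ∘ π) := (E.symm_mem π u).2 humem
    have hone : (fun _ => (1:ℝ)) = u + u ∘ π := by
      funext k
      by_cases hk : k ∈ T
      · have hπk : π k ∉ T := by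
          intro h
          exact ((hπ k).1 h) hk
        simp [hudef, hk, hπk, Function.comp]
      · have hπk : π k ∈ T := (hπ k).2 hk
        simp [hudef, hk, hπk, Function.comp]
    rw [hone]
    exact E.mem_add humem huπ
  -- the supremum norm facts for members of E
  have hbdd : ∀ x, E.Mem x → BddAbove (Set.range fun k => |x k|) :=
    fun x hx => ⟨C * E.N x, by rintro - ⟨k, rfl⟩; exact hA x hx k⟩
  have hlow : ∀ x, E.Mem x → C⁻¹ * (⨆ k, |x k|) ≤ E.N x := by
    intro x hx
    have h1 : (⨆ k, |x k|) ≤ C * E.N x := ciSup_le (hA x hx)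
    calc C⁻¹ * (⨆ k, |x k|) ≤ C⁻¹ * (C * E.N x) :=
          mul_le_mul_of_nonneg_left h1 (by positivity)
    _ = E.N x := by field_simp
  have hsup0 : ∀ x, E.Mem x → 0 ≤ ⨆ k, |x k| :=
    fun x hx => le_trans (abs_nonneg _) (le_ciSup (hbdd x hx) 0)
  -- dichotomy
  by_cases h1 : E.Mem (fun _ => (1:ℝ))
  · -- E = ℓ∞
    apply hlinf
    constructor
    · intro x
      constructor
      · intro hx
        exact ⟨C * E.N x, hA x hx⟩
      · rintro ⟨M, hM⟩
        have hM0 : 0 ≤ M := le_trans (abs_nonneg _) (hM 0)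
        have hdom : ∀ k, |x k| ≤ |(M • (fun _ => (1:ℝ))) k| := by
          intro k
          have : (M • (fun _ => (1:ℝ))) k = M := by simp
          rw [this, abs_of_nonneg hM0]
          exact hM k
        exact (E.ideal hdom (E.mem_smul M h1)).1
    · refine ⟨C⁻¹, max (E.N (fun _ => (1:ℝ))) 1, by positivity, by positivity, fun x hx => ?_⟩
      refine ⟨hlow x hx, ?_⟩
      have hS0 := hsup0 x hx
      have hdom : ∀ k, |x k| ≤ |((⨆ j, |x j|) • (fun _ => (1:ℝ))) k| := by
        intro k
        have : ((⨆ j, |x j|) • (fun _ => (1:ℝ))) k = ⨆ j, |x j| := by simp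
        rw [this, abs_of_nonneg hS0]
        exact le_ciSup (hbdd x hx) k
      have h2 := (E.ideal hdom (E.mem_smul _ h1)).2
      rw [E.norm_smul, abs_of_nonneg hS0] at h2
      calc E.N x ≤ (⨆ j, |x j|) * E.N (fun _ => (1:ℝ)) := h2
      _ ≤ (⨆ j, |x j|) * max (E.N (fun _ => (1:ℝ))) 1 :=
            mul_le_mul_of_nonneg_left (le_max_left _ _) hS0
      _ = max (E.N (fun _ => (1:ℝ))) 1 * ⨆ j, |x j| := mul_comm _ _
  · -- E = c₀
    apply hc0
    have hmemc0 : ∀ x, E.Mem x ↔ Filter.Tendsto x Filter.atTop (nhds 0) := by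
      intro x
      constructor
      · intro hx
        by_contra hnt
        exact h1 (hOne x hx hnt)
      · intro hx
        exact (hC0 x hx).1
    constructor
    · exact hmemc0
    · refine ⟨C⁻¹, max (2 / c) 1, by positivity, by positivity, fun x hx => ?_⟩
      refine ⟨hlow x hx, ?_⟩
      have h2 := (hC0 x ((hmemc0 x).1 hx)).2
      have hS0 := hsup0 x hx
      calc E.N x ≤ (2 / c) * ⨆ k, |x k| := h2
      _ ≤ max (2 / c) 1 * ⨆ k, |x k| :=
            mul_le_mul_of_nonneg_right (le_max_left _ _) hS0
end
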